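/- Under the DCSBM population setup, the regularized population Laplacian factorizes as 𝓛_δ = ‖θ̃‖² · Γ̃ (D̃ P̃ D̃) Γ̃ᵀ. -/

import Mathlib

open Matrix BigOperators MeasureTheory ProbabilityTheory

noncomputable section

namespace DCSBM

variable {n K : ℕ}

/-- The `n × K` membership matrix `Z` with `Z i k = 1` iff node `i` is in community `k`. -/
def Zmat (g : Fin n → Fin K) : Matrix (Fin n) (Fin K) ℝ :=
  Matrix.of fun i k => if g i = k then (1 : ℝ) else 0

/-- The population expectation matrix `Ω = Θ Z P Zᵀ Θ`. -/
def Omega (g : Fin n → Fin K) (θ : Fin n → ℝ) (P : Matrix (Fin K) (Fin K) ℝ) :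
    Matrix (Fin n) (Fin n) ℝ :=
  Matrix.diagonal θ * Zmat g * P * (Zmat g)ᵀ * Matrix.diagonal θ

/-- Expected degrees `𝒟_ii = ∑_j Ω_ij`. -/
def Dvec (g : Fin n → Fin K) (θ : Fin n → ℝ) (P : Matrix (Fin K) (Fin K) ℝ) : Fin n → ℝ :=
  fun i => ∑ j, Omega g θ P i j

/-- The regularized population Laplacian `𝓛_δ = 𝒟_δ^{-1/2} Ω 𝒟_δ^{-1/2}`. -/
def Ldelta (g : Fin n → Fin K) (θ : Fin n → ℝ) (P : Matrix (Fin K) (Fin K) ℝ) (δ d : ℝ) :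
    Matrix (Fin n) (Fin n) ℝ :=
  Matrix.diagonal (fun i => (Real.sqrt (Dvec g θ P i + δ * d))⁻¹) * Omega g θ P *
    Matrix.diagonal (fun i => (Real.sqrt (Dvec g θ P i + δ * d))⁻¹)

/-- `θ^δ_i = θ_i 𝒟_ii / (𝒟_ii + δ d)`. -/
def thetaDelta (g : Fin n → Fin K) (θ : Fin n → ℝ) (P : Matrix (Fin K) (Fin K) ℝ) (δ d : ℝ) :
    Fin n → ℝ :=
  fun i => θ i * Dvec g θ P i / (Dvec g θ P i + δ * d)

/-- `θ̃_i = √(θ^δ_i)`. -/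
def thetaTilde (g : Fin n → Fin K) (θ : Fin n → ℝ) (P : Matrix (Fin K) (Fin K) ℝ) (δ d : ℝ) :
    Fin n → ℝ :=
  fun i => Real.sqrt (thetaDelta g θ P δ d i)

/-- `θ̃^{(k)}_i = θ̃_i · 1{g i = k}`. -/
def thetaTildeK (g : Fin n → Fin K) (θ : Fin n → ℝ) (P : Matrix (Fin K) (Fin K) ℝ) (δ d : ℝ)
    (k : Fin K) : Fin n → ℝ :=
  fun i => if g i = k then thetaTilde g θ P δ d i else 0

/-- Euclidean norm of a vector. -/
def normE {m : ℕ} (v : Fin m → ℝ) : ℝ := Real.sqrt (∑ i, v i ^ 2)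

/-- Row sums of `Q = P Zᵀ Θ`, the diagonal entries of `D_P`. -/
def DPvec (g : Fin n → Fin K) (θ : Fin n → ℝ) (P : Matrix (Fin K) (Fin K) ℝ) : Fin K → ℝ :=
  fun k => ∑ j, (P * (Zmat g)ᵀ * Matrix.diagonal θ) k j

/-- `P̃ = D_P^{-1/2} P D_P^{-1/2}`. -/
def Ptilde (g : Fin n → Fin K) (θ : Fin n → ℝ) (P : Matrix (Fin K) (Fin K) ℝ) :
    Matrix (Fin K) (Fin K) ℝ :=
  Matrix.diagonal (fun k => (Real.sqrt (DPvec g θ P k))⁻¹) * P *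
    Matrix.diagonal (fun k => (Real.sqrt (DPvec g θ P k))⁻¹)

/-- `D̃ = diag(‖θ̃^{(k)}‖ / ‖θ̃‖)`. -/
def Dtilde (g : Fin n → Fin K) (θ : Fin n → ℝ) (P : Matrix (Fin K) (Fin K) ℝ) (δ d : ℝ) :
    Matrix (Fin K) (Fin K) ℝ :=
  Matrix.diagonal fun k => normE (thetaTildeK g θ P δ d k) / normE (thetaTilde g θ P δ d)

/-- `Γ̃`, the `n × K` matrix whose `k`-th column is `θ̃^{(k)} / ‖θ̃^{(k)}‖`. -/
def Gamma (g : Fin n → Fin K) (θ : Fin n → ℝ) (P : Matrix (Fin K) (Fin K) ℝ) (δ d : ℝ) :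
    Matrix (Fin n) (Fin K) ℝ :=
  Matrix.of fun i k => thetaTildeK g θ P δ d k i / normE (thetaTildeK g θ P δ d k)

/-!
Every matrix in sight has the form `Omega g v B = diag v · Z · B · Zᵀ · diag v`. A diagonal
conjugation on the node side multiplies `v`, and one on the community side passes through `Z`
as `diag (s ∘ g)`. Since `Γ̃ D̃ = ‖θ̃‖⁻¹ diag θ̃ · Z`, the right-hand side is
`Omega g θ̃ P̃ = Omega g (θ̃ · D_P^{-1/2} ∘ g) P`, and `𝒟_ii = θ_i D_P(g_i)` gives
`θ̃_i D_P(g_i)^{-1/2} = θ_i (𝒟_ii + δd)^{-1/2}`, so this is `𝓛_δ`.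
-/

lemma Zmat_mul_diagonal (g : Fin n → Fin K) (w : Fin K → ℝ) :
    Zmat g * diagonal w = diagonal (w ∘ g) * Zmat g := by
  ext i k
  by_cases h : g i = k <;> simp [Zmat, h]

lemma mul_Zmat_transpose_apply {m : Type*} (g : Fin n → Fin K)
    (B : Matrix m (Fin K) ℝ) (k : m) (j : Fin n) : (B * (Zmat g)ᵀ) k j = B k (g j) := by
  simp [Matrix.mul_apply, Zmat]

lemma Zmat_mul_apply {m : Type*} (g : Fin n → Fin K)
    (B : Matrix (Fin K) m ℝ) (i : Fin n) (j : m) : (Zmat g * B) i j = B (g i) j := by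
  simp [Matrix.mul_apply, Zmat]

lemma diagonal_mul_Omega_mul_diagonal (g : Fin n → Fin K) (u v : Fin n → ℝ)
    (B : Matrix (Fin K) (Fin K) ℝ) :
    diagonal u * Omega g v B * diagonal u = Omega g (u * v) B :=
  calc diagonal u * Omega g v B * diagonal u
      = diagonal u * diagonal v * Zmat g * B * (Zmat g)ᵀ * (diagonal v * diagonal u) := by
        simp only [Omega, Matrix.mul_assoc]
    _ = Omega g (u * v) B := by
        rw [(commute_diagonal v u).eq, diagonal_mul_diagonal]
        rfl

lemma Omega_diagonal_mul_mul_diagonal (g : Fin n → Fin K) (v : Fin n → ℝ) (s : Fin K → ℝ)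
    (B : Matrix (Fin K) (Fin K) ℝ) :
    Omega g v (diagonal s * B * diagonal s) = Omega g (v * s ∘ g) B := by
  have hsT : diagonal s * (Zmat g)ᵀ = (Zmat g)ᵀ * diagonal (s ∘ g) := by
    simpa using congrArg transpose (Zmat_mul_diagonal g s)
  calc Omega g v (diagonal s * B * diagonal s)
      = diagonal v * (Zmat g * diagonal s) * B * (diagonal s * (Zmat g)ᵀ) * diagonal v := by
        simp only [Omega, Matrix.mul_assoc]
    _ = diagonal v * diagonal (s ∘ g) * Zmat g * B * (Zmat g)ᵀ * (diagonal (s ∘ g) * diagonal v) := by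
        rw [Zmat_mul_diagonal, hsT]
        simp only [Matrix.mul_assoc]
    _ = Omega g (v * s ∘ g) B := by
        rw [(commute_diagonal (s ∘ g) v).eq, diagonal_mul_diagonal]
        rfl

lemma Omega_smul (g : Fin n → Fin K) (c : ℝ) (v : Fin n → ℝ) (B : Matrix (Fin K) (Fin K) ℝ) :
    Omega g (c • v) B = c ^ 2 • Omega g v B := by
  simp only [Omega, diagonal_smul, Matrix.smul_mul, Matrix.mul_smul, smul_smul, sq]

lemma Omega_apply (g : Fin n → Fin K) (θ : Fin n → ℝ) (P : Matrix (Fin K) (Fin K) ℝ)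
    (i j : Fin n) : Omega g θ P i j = θ i * P (g i) (g j) * θ j := by
  simp only [Omega, mul_diagonal, diagonal_mul, Matrix.mul_assoc, Zmat_mul_apply,
    mul_Zmat_transpose_apply]

lemma DPvec_apply (g : Fin n → Fin K) (θ : Fin n → ℝ) (P : Matrix (Fin K) (Fin K) ℝ)
    (k : Fin K) : DPvec g θ P k = ∑ j, P k (g j) * θ j := by
  simp only [DPvec, mul_diagonal, mul_Zmat_transpose_apply]

lemma Dvec_eq_mul_DPvec (g : Fin n → Fin K) (θ : Fin n → ℝ) (P : Matrix (Fin K) (Fin K) ℝ)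
    (i : Fin n) : Dvec g θ P i = θ i * DPvec g θ P (g i) := by
  simp [Dvec, Omega_apply, DPvec_apply, Finset.mul_sum, mul_assoc]

lemma apply_eq_zero_of_normE_eq_zero {m : ℕ} {v : Fin m → ℝ} (h : normE v = 0) (i : Fin m) :
    v i = 0 := by
  have hsum : ∑ j, v j ^ 2 = 0 :=
    le_antisymm (Real.sqrt_eq_zero'.mp h) (Finset.sum_nonneg fun j _ => sq_nonneg (v j))
  exact pow_eq_zero_iff two_ne_zero |>.mp <|
    (Finset.sum_eq_zero_iff_of_nonneg fun j _ => sq_nonneg (v j)).mp hsum i (Finset.mem_univ i)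

lemma div_normE_mul_normE {m : ℕ} (v : Fin m → ℝ) (i : Fin m) :
    v i / normE v * normE v = v i := by
  by_cases h : normE v = 0
  · simp [h, apply_eq_zero_of_normE_eq_zero h i]
  · exact div_mul_cancel₀ (v i) h

lemma normE_smul_inv_smul {m : ℕ} (v : Fin m → ℝ) : normE v • (normE v)⁻¹ • v = v := by
  ext i
  simpa [div_eq_inv_mul, mul_comm] using div_normE_mul_normE v i

lemma Gamma_mul_Dtilde (g : Fin n → Fin K) (θ : Fin n → ℝ) (P : Matrix (Fin K) (Fin K) ℝ)
    (δ d : ℝ) : Gamma g θ P δ d * Dtilde g θ P δ d =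
      diagonal ((normE (thetaTilde g θ P δ d))⁻¹ • thetaTilde g θ P δ d) * Zmat g := by
  ext i k
  simp only [Gamma, Dtilde, mul_diagonal, diagonal_mul, of_apply, mul_div_assoc',
    div_normE_mul_normE]
  by_cases h : g i = k <;> simp [thetaTildeK, Zmat, h, div_eq_inv_mul]

lemma normE_sq_smul_Gamma_conj (g : Fin n → Fin K) (θ : Fin n → ℝ)
    (P B : Matrix (Fin K) (Fin K) ℝ) (δ d : ℝ) :
    normE (thetaTilde g θ P δ d) ^ 2 •
        (Gamma g θ P δ d * (Dtilde g θ P δ d * B * Dtilde g θ P δ d) * (Gamma g θ P δ d)ᵀ) =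
      Omega g (thetaTilde g θ P δ d) B := by
  set t := normE (thetaTilde g θ P δ d) with ht
  calc t ^ 2 • (Gamma g θ P δ d * (Dtilde g θ P δ d * B * Dtilde g θ P δ d) * (Gamma g θ P δ d)ᵀ)
      = t ^ 2 • (Gamma g θ P δ d * Dtilde g θ P δ d * B *
          (Gamma g θ P δ d * Dtilde g θ P δ d)ᵀ) := by
        rw [transpose_mul, Dtilde, diagonal_transpose]
        simp only [Matrix.mul_assoc]
    _ = t ^ 2 • Omega g (t⁻¹ • thetaTilde g θ P δ d) B := by
        rw [Gamma_mul_Dtilde, ← ht, transpose_mul, diagonal_transpose]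
        simp only [Omega, Matrix.mul_assoc]
    _ = Omega g (thetaTilde g θ P δ d) B := by
        rw [← Omega_smul, normE_smul_inv_smul]

lemma DPvec_pos {g : Fin n → Fin K} (hg : Function.Surjective g) {θ : Fin n → ℝ}
    (hθ : ∀ i, 0 < θ i) {P : Matrix (Fin K) (Fin K) ℝ} (hPdet : P.det ≠ 0)
    (hPnn : ∀ k l, 0 ≤ P k l) (k : Fin K) : 0 < DPvec g θ P k := by
  obtain ⟨l, hl⟩ : ∃ l, P k l ≠ 0 := by
    by_contra! h
    exact hPdet (det_eq_zero_of_row_eq_zero k h)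
  obtain ⟨j, rfl⟩ := hg l
  rw [DPvec_apply]
  exact Finset.sum_pos' (fun i _ => mul_nonneg (hPnn _ _) (hθ i).le)
    ⟨j, Finset.mem_univ j, mul_pos ((hPnn k (g j)).lt_of_ne' hl) (hθ j)⟩

lemma thetaTilde_eq {g : Fin n → Fin K} {θ : Fin n → ℝ} {P : Matrix (Fin K) (Fin K) ℝ}
    {i : Fin n} (hθ : 0 ≤ θ i) (hDP : 0 ≤ DPvec g θ P (g i)) (δ d : ℝ) :
    thetaTilde g θ P δ d i = θ i * √(DPvec g θ P (g i)) / √(Dvec g θ P i + δ * d) := by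
  have hθδ : thetaDelta g θ P δ d i = θ i ^ 2 * DPvec g θ P (g i) / (Dvec g θ P i + δ * d) := by
    rw [thetaDelta, Dvec_eq_mul_DPvec]
    ring
  rw [thetaTilde, hθδ, Real.sqrt_div (mul_nonneg (sq_nonneg _) hDP),
    Real.sqrt_mul (sq_nonneg _), Real.sqrt_sq hθ]

lemma thetaTilde_mul_inv_sqrt_DPvec {g : Fin n → Fin K} {θ : Fin n → ℝ} (hθ : ∀ i, 0 ≤ θ i)
    {P : Matrix (Fin K) (Fin K) ℝ} (hDP : ∀ k, 0 < DPvec g θ P k) (δ d : ℝ) :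
    thetaTilde g θ P δ d * (fun k => (√(DPvec g θ P k))⁻¹) ∘ g =
      (fun i => (√(Dvec g θ P i + δ * d))⁻¹) * θ := by
  ext i
  have hsqrt : √(DPvec g θ P (g i)) ≠ 0 := (Real.sqrt_pos.mpr (hDP (g i))).ne'
  simp only [Pi.mul_apply, Function.comp_apply, thetaTilde_eq (hθ i) (hDP (g i)).le]
  field_simp

theorem stmt2_general {n K : ℕ}
    (g : Fin n → Fin K) (hg : Function.Surjective g)
    (θ : Fin n → ℝ) (hθ : ∀ i, 0 < θ i)
    (P : Matrix (Fin K) (Fin K) ℝ) (hPdet : P.det ≠ 0)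
    (hPnn : ∀ k l, 0 ≤ P k l)
    (δ d : ℝ) :
    Ldelta g θ P δ d =
      (normE (thetaTilde g θ P δ d)) ^ 2 •
        (Gamma g θ P δ d * (Dtilde g θ P δ d * Ptilde g θ P * Dtilde g θ P δ d) *
          (Gamma g θ P δ d)ᵀ) := by
  rw [normE_sq_smul_Gamma_conj, Ptilde, Omega_diagonal_mul_mul_diagonal,
    thetaTilde_mul_inv_sqrt_DPvec (fun i => (hθ i).le) (DPvec_pos hg hθ hPdet hPnn), Ldelta,
    diagonal_mul_Omega_mul_diagonal]

/-- The factorization `𝓛_δ = ‖θ̃‖² · Γ̃ (D̃ P̃ D̃) Γ̃ᵀ`. -/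
theorem stmt2 {n K : ℕ} (hK : 1 ≤ K) (hKn : K ≤ n)
    (g : Fin n → Fin K) (hg : Function.Surjective g)
    (θ : Fin n → ℝ) (hθ : ∀ i, 0 < θ i)
    (P : Matrix (Fin K) (Fin K) ℝ) (hPsymm : P.IsSymm) (hPdet : P.det ≠ 0)
    (hPnn : ∀ k l, 0 ≤ P k l)
    (δ d : ℝ) (hδ : 0 < δ) (hd : 0 < d) :
    Ldelta g θ P δ d =
      (normE (thetaTilde g θ P δ d)) ^ 2 •
        (Gamma g θ P δ d * (Dtilde g θ P δ d * Ptilde g θ P * Dtilde g θ P δ d) *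
          (Gamma g θ P δ d)ᵀ) :=
  stmt2_general g hg θ hθ P hPdet hPnn δ d

end DCSBM
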